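/- Let b satisfy ⟨b(x)−b(y), x−y⟩ ≥ α|x−y|², let φ(x) = exp(μ√(1+|x|²)) with μ > 0, let L₀ > 0 and L(x,y) = L₀(1+|x|+|y|), and suppose the operator F satisfies F(x,[φ]) ≤ C(F)φ(x) for all x (e.g. F(x,[φ]) = tr(A(x)D²φ(x)) with bounded A, or the Lévy integral operator with measure ν satisfying the integrability condition). Define L_L[φ](x,y) = −F(x,[φ]) − F(y,[φ]) + ⟨b(x),Dφ(x)⟩ + ⟨b(y),Dφ(y)⟩ − L(x,y)(|Dφ(x)| + |Dφ(y)|). Then if α > 2L₀, there exists K = K(α, L₀, μ, C(F), |b(0)|) > 0 such that L_L[φ](x,y) ≥ φ(x) + φ(y) − 2K for all x, y ∈ ℝ^N. -/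

import Mathlib

/-!
Write `φ x = exp (μ ⟨x⟩)` with `⟨x⟩ = √(1 + ‖x‖²)`, so that `∇φ x = (μ φ x / ⟨x⟩) • x`. Strong
monotonicity of `b` gives `⟪b x, ∇φ x⟫ ≥ μ φ x (α (‖x‖ - 1) - ‖b 0‖)`, while `‖∇φ x‖ ≤ μ φ x`.
Since `φ` is radially increasing, `(‖x‖ - ‖y‖) (φ x - φ y) ≥ 0`, which moves the mixed terms
`‖y‖ ‖∇φ x‖` of the Lipschitz penalty onto the diagonal. Each point then contributes at least
`φ x + φ x (μ (α - 2 L₀) ‖x‖ - D)` for a constant `D`, and `φ (β r - D)` with `β > 0` is bounded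
below because it is negative only for `r < D / β`.
-/

open Real

noncomputable def growthFun {E : Type*} [Norm E] (μ : ℝ) (x : E) : ℝ :=
  exp (μ * √(1 + ‖x‖ ^ 2))

lemma mul_sub_one_sub_le_div_sqrt_one_add_sq {α B r : ℝ} (hα : 0 ≤ α) (hB : 0 ≤ B) (hr : 0 ≤ r) :
    α * (r - 1) - B ≤ (α * r ^ 2 - B * r) / √(1 + r ^ 2) := by
  have hs_one : 1 ≤ √(1 + r ^ 2) := le_sqrt_of_sq_le (by nlinarith)
  have hs_ge : r ≤ √(1 + r ^ 2) := le_sqrt_of_sq_le (by nlinarith)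
  have hs_le : √(1 + r ^ 2) ≤ 1 + r := sqrt_le_iff.2 ⟨by linarith, by nlinarith⟩
  have hsq : (r - 1) * √(1 + r ^ 2) ≤ r ^ 2 := by
    rcases le_total r 1 with h | h
    · nlinarith
    · nlinarith [mul_le_mul_of_nonneg_left hs_le (sub_nonneg.2 h)]
  rw [le_div_iff₀ (by linarith)]
  nlinarith [mul_le_mul_of_nonneg_left hs_ge hB]

lemma neg_mul_le_mul_sub_of_monotoneOn {f : ℝ → ℝ} (hf : MonotoneOn f (Set.Ici 0))
    (hf₀ : ∀ r, 0 ≤ f r) {β D r : ℝ} (hβ : 0 < β) (hD : 0 ≤ D) (hr : 0 ≤ r) :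
    -(D * f (D / β)) ≤ f r * (β * r - D) := by
  rcases le_or_gt D (β * r) with h | h
  · nlinarith [hf₀ r, hf₀ (D / β)]
  · have hrD : r ≤ D / β := by rw [le_div_iff₀ hβ]; linarith
    have hfr : f r ≤ f (D / β) := hf hr (hr.trans hrD) hrD
    nlinarith [mul_le_mul_of_nonneg_left hfr hD, mul_nonneg (hf₀ r) (mul_nonneg hβ.le hr)]

lemma sq_norm_sub_mul_norm_le_inner_self {E : Type*} [NormedAddCommGroup E]
    [InnerProductSpace ℝ E] {α : ℝ} {b : E → E}
    (hb : ∀ x y, α * ‖x - y‖ ^ 2 ≤ inner ℝ (b x - b y) (x - y)) (x : E) :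
    α * ‖x‖ ^ 2 - ‖b 0‖ * ‖x‖ ≤ inner ℝ (b x) x := by
  have h := hb x 0
  rw [sub_zero, inner_sub_left] at h
  linarith [neg_le_of_abs_le (abs_real_inner_le_norm (b 0) x)]

namespace growthFun

section Seminormed

variable {E : Type*} [SeminormedAddCommGroup E] {μ : ℝ}

lemma pos (μ : ℝ) (x : E) : 0 < growthFun μ x := exp_pos _

@[simp]
lemma norm_apply (μ : ℝ) (x : E) : growthFun μ ‖x‖ = growthFun μ x := by
  simp [growthFun]

lemma le_of_norm_le (hμ : 0 ≤ μ) {x y : E} (h : ‖x‖ ≤ ‖y‖) : growthFun μ x ≤ growthFun μ y := by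
  unfold growthFun
  gcongr

lemma monotoneOn (hμ : 0 ≤ μ) : MonotoneOn (growthFun μ : ℝ → ℝ) (Set.Ici 0) :=
  fun r hr s hs hrs => le_of_norm_le hμ <| by
    rwa [Real.norm_of_nonneg hr, Real.norm_of_nonneg hs]

lemma norm_add_mul_add_le (hμ : 0 ≤ μ) (x y : E) :
    (‖x‖ + ‖y‖) * (growthFun μ x + growthFun μ y) ≤
      2 * (‖x‖ * growthFun μ x + ‖y‖ * growthFun μ y) := by
  have hmono : 0 ≤ (‖x‖ - ‖y‖) * (growthFun μ x - growthFun μ y) := by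
    rcases le_total ‖x‖ ‖y‖ with h | h
    · exact mul_nonneg_of_nonpos_of_nonpos (by linarith) (by linarith [le_of_norm_le hμ h])
    · exact mul_nonneg (by linarith) (by linarith [le_of_norm_le hμ h])
  linarith

end Seminormed

variable {E : Type*} [NormedAddCommGroup E] [InnerProductSpace ℝ E] {μ : ℝ}

lemma hasGradientAt [CompleteSpace E] (μ : ℝ) (x : E) :
    HasGradientAt (growthFun μ) ((μ * growthFun μ x / √(1 + ‖x‖ ^ 2)) • x) x := by
  have hu : 0 < 1 + ‖x‖ ^ 2 := by positivity
  have hnorm : HasFDerivAt (fun z : E => 1 + ‖z‖ ^ 2) (2 • innerSL ℝ x) x := by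
    simpa using ((hasFDerivAt_id x).norm_sq).const_add 1
  have hexp : HasDerivAt (fun t => exp (μ * t)) (exp (μ * √(1 + ‖x‖ ^ 2)) * μ)
      (√(1 + ‖x‖ ^ 2)) := by
    simpa using ((hasDerivAt_id _).const_mul μ).exp
  have hcomp := (hexp.comp _ (hasDerivAt_sqrt hu.ne')).comp_hasFDerivAt x hnorm
  rw [hasGradientAt_iff_hasFDerivAt]
  refine hcomp.congr_fderiv ?_
  ext v
  simp [growthFun, InnerProductSpace.toDual_apply_apply]
  field_simp

variable [CompleteSpace E]

lemma norm_gradient_le (hμ : 0 ≤ μ) (x : E) :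
    ‖gradient (growthFun μ) x‖ ≤ μ * growthFun μ x := by
  have hs : ‖x‖ ≤ √(1 + ‖x‖ ^ 2) := le_sqrt_of_sq_le (by linarith)
  have hc : 0 ≤ μ * growthFun μ x := mul_nonneg hμ (pos μ x).le
  rw [(hasGradientAt μ x).gradient, norm_smul, norm_of_nonneg (div_nonneg hc (sqrt_nonneg _)),
    div_mul_eq_mul_div, div_le_iff₀ (by positivity)]
  exact mul_le_mul_of_nonneg_left hs hc

lemma mul_sub_le_inner_gradient {α : ℝ} (hα : 0 ≤ α) (hμ : 0 ≤ μ) {b : E → E}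
    (hb : ∀ x y, α * ‖x - y‖ ^ 2 ≤ inner ℝ (b x - b y) (x - y)) (x : E) :
    μ * growthFun μ x * (α * (‖x‖ - 1) - ‖b 0‖) ≤ inner ℝ (b x) (gradient (growthFun μ) x) := by
  have : 0 ≤ μ * growthFun μ x := mul_nonneg hμ (pos μ x).le
  rw [(hasGradientAt μ x).gradient, real_inner_smul_right, div_mul_eq_mul_div, mul_div_assoc]
  gcongr
  calc α * (‖x‖ - 1) - ‖b 0‖
      ≤ (α * ‖x‖ ^ 2 - ‖b 0‖ * ‖x‖) / √(1 + ‖x‖ ^ 2) :=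
        mul_sub_one_sub_le_div_sqrt_one_add_sq hα (norm_nonneg _) (norm_nonneg _)
    _ ≤ inner ℝ (b x) x / √(1 + ‖x‖ ^ 2) := by
        gcongr; exact sq_norm_sub_mul_norm_le_inner_self hb x

end growthFun

theorem supersolution_property_growth_function_general {N : ℕ} (μ α L₀ CF : ℝ)
    (hμ : 0 < μ) (hL₀ : 0 < L₀) (hCF : 0 ≤ CF)
    (hαL : α > 2 * L₀)
    (b : EuclideanSpace ℝ (Fin N) → EuclideanSpace ℝ (Fin N))
    (hb : ∀ x y : EuclideanSpace ℝ (Fin N),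
      α * ‖x - y‖ ^ 2 ≤ (inner ℝ (b x - b y) (x - y) : ℝ))
    (φ : EuclideanSpace ℝ (Fin N) → ℝ)
    (hφ : ∀ x, φ x = Real.exp (μ * Real.sqrt (1 + ‖x‖ ^ 2)))
    (F : EuclideanSpace ℝ (Fin N) → ℝ)
    (hF : ∀ x, F x ≤ CF * φ x) :
    ∃ K : ℝ, 0 < K ∧ ∀ x y : EuclideanSpace ℝ (Fin N),
      φ x + φ y - 2 * K ≤
        -F x - F y + (inner ℝ (b x) (gradient φ x) : ℝ) +
          (inner ℝ (b y) (gradient φ y) : ℝ) -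
          L₀ * (1 + ‖x‖ + ‖y‖) * (‖gradient φ x‖ + ‖gradient φ y‖) := by
  obtain rfl : φ = growthFun μ := funext hφ
  have hα : 0 ≤ α := by linarith
  set β := μ * (α - 2 * L₀)
  have hβ : 0 < β := mul_pos hμ (by linarith)
  set D := μ * α + μ * ‖b 0‖ + CF + μ * L₀ + 1
  have hD : 0 < D := by positivity
  refine ⟨D * growthFun μ (D / β), mul_pos hD (growthFun.pos _ _), fun x y => ?_⟩
  have hpoint (z : EuclideanSpace ℝ (Fin N)) :
      growthFun μ z - D * growthFun μ (D / β) ≤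
        -(CF * growthFun μ z) + inner ℝ (b z) (gradient (growthFun μ) z) -
          L₀ * μ * (1 + 2 * ‖z‖) * growthFun μ z := by
    have hlow := neg_mul_le_mul_sub_of_monotoneOn (growthFun.monotoneOn hμ.le)
      (fun r => (growthFun.pos μ r).le) hβ hD.le (norm_nonneg z)
    rw [growthFun.norm_apply] at hlow
    linear_combination hlow + growthFun.mul_sub_le_inner_gradient hα hμ.le hb z
  have hpenalty : L₀ * (1 + ‖x‖ + ‖y‖) * (‖gradient (growthFun μ) x‖ + ‖gradient (growthFun μ) y‖)
      ≤ L₀ * μ * ((1 + 2 * ‖x‖) * growthFun μ x + (1 + 2 * ‖y‖) * growthFun μ y) := by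
    have hmix := growthFun.norm_add_mul_add_le hμ.le x y
    calc _ ≤ L₀ * (1 + ‖x‖ + ‖y‖) * (μ * growthFun μ x + μ * growthFun μ y) := by
          gcongr <;> exact growthFun.norm_gradient_le hμ.le _
      _ ≤ _ := by linear_combination (L₀ * μ) * hmix
  linarith [hpoint x, hpoint y, hF x, hF y]

theorem supersolution_property_growth_function {N : ℕ} (μ α L₀ CF : ℝ)
    (hμ : 0 < μ) (hα : 0 < α) (hL₀ : 0 < L₀) (hCF : 0 ≤ CF)
    (hαL : α > 2 * L₀)
    (b : EuclideanSpace ℝ (Fin N) → EuclideanSpace ℝ (Fin N))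
    (hb : ∀ x y : EuclideanSpace ℝ (Fin N),
      α * ‖x - y‖ ^ 2 ≤ (inner ℝ (b x - b y) (x - y) : ℝ))
    (φ : EuclideanSpace ℝ (Fin N) → ℝ)
    (hφ : ∀ x, φ x = Real.exp (μ * Real.sqrt (1 + ‖x‖ ^ 2)))
    (F : EuclideanSpace ℝ (Fin N) → ℝ)
    (hF : ∀ x, F x ≤ CF * φ x) :
    ∃ K : ℝ, 0 < K ∧ ∀ x y : EuclideanSpace ℝ (Fin N),
      φ x + φ y - 2 * K ≤
        -F x - F y + (inner ℝ (b x) (gradient φ x) : ℝ) +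
          (inner ℝ (b y) (gradient φ y) : ℝ) -
          L₀ * (1 + ‖x‖ + ‖y‖) * (‖gradient φ x‖ + ‖gradient φ y‖) :=
  supersolution_property_growth_function_general μ α L₀ CF hμ hL₀ hCF hαL b hb φ hφ F hF
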